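/- If there exists R ∈ ℝ such that ε(ζ) ≤ R for μ-a.e. ζ ∈ 𝓔, then δ(T) → 0 as T → ∞ and D(T) → 0 as T → ∞. -/

import Mathlib

/-!
Writing `g = ε - ε⁰ ∈ [0, M]` (`M = R - ε⁰`) and `β = 1/(k_B T)`, one has `δ(T) = 2β⟨g⟩_β` and
`T δ(T) = (2/k_B)⟨g⟩_β`, where `⟨·⟩_β` is the Gibbs mean with density `e^{-βg}`. Differentiating
under the integral sign gives `d⟨g⟩_β/dβ = -Var_β(g)`, hence `D(T) = 2β² Var_β(g)`. Both Gibbs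
averages lie in `[0, M]` resp. `[-M², M²]`, so `|δ| ≤ 2βM` and `|D| ≤ 2β²M²`, which tend to `0`
as `T → ∞`. Finiteness of `μ` comes for free: `e^{-g} ≥ e^{-M}` is integrable.
-/

open MeasureTheory Real Filter

noncomputable section

variable {𝓔 : Type*} [MeasurableSpace 𝓔]

/-- The (thermodynamic) number of internal degrees of freedom
`δ(T) = (2/(k_B T)) ⬝ (∫ ε̄ e^{-ε̄/(k_B T)} dμ) / (∫ e^{-ε̄/(k_B T)} dμ)`, `ε̄ = ε - ε0`. -/
def deltaFun (μ : Measure 𝓔) (ε : 𝓔 → ℝ) (ε0 : ℝ) (kB T : ℝ) : ℝ :=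
  (2 / (kB * T)) *
    ((∫ ζ, (ε ζ - ε0) * Real.exp (-(ε ζ - ε0) / (kB * T)) ∂μ) /
      (∫ ζ, Real.exp (-(ε ζ - ε0) / (kB * T)) ∂μ))

/-- `D(T) = d(T δ(T))/dT`. -/
def Dfun (μ : Measure 𝓔) (ε : 𝓔 → ℝ) (ε0 : ℝ) (kB T : ℝ) : ℝ :=
  deriv (fun s => s * deltaFun μ ε ε0 kB s) T

open Set Topology

def partitionFunction (μ : Measure 𝓔) (g : 𝓔 → ℝ) (β : ℝ) : ℝ :=
  ∫ a, exp (-β * g a) ∂μ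

def gibbsMean (μ : Measure 𝓔) (g : 𝓔 → ℝ) (β : ℝ) (f : 𝓔 → ℝ) : ℝ :=
  (∫ a, f a * exp (-β * g a) ∂μ) / partitionFunction μ g β

def gibbsVariance (μ : Measure 𝓔) (g : 𝓔 → ℝ) (β : ℝ) : ℝ :=
  gibbsMean μ g β (fun a => g a ^ 2) - gibbsMean μ g β g ^ 2

lemma exp_neg_mul_le_exp_abs_mul {x β M : ℝ} (hx : x ∈ Icc 0 M) :
    exp (-β * x) ≤ exp (|β| * M) :=
  exp_le_exp.2 <| by nlinarith [neg_abs_le β, abs_nonneg β, hx.1, hx.2]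

lemma isFiniteMeasure_of_integrable_exp_neg_mul {μ : Measure 𝓔} {g : 𝓔 → ℝ} {β M : ℝ}
    (hβ : 0 ≤ β) (hint : Integrable (fun a => exp (-β * g a)) μ) (hgM : ∀ᵐ a ∂μ, g a ≤ M) :
    IsFiniteMeasure μ := by
  refine (integrable_const_iff_isFiniteMeasure (exp_pos (-β * M)).ne').1 <|
    hint.mono' aestronglyMeasurable_const ?_
  filter_upwards [hgM] with a ha
  rw [norm_of_nonneg (exp_pos _).le]
  exact exp_le_exp.2 (by nlinarith)

section GibbsMean

variable {μ : Measure 𝓔} [IsFiniteMeasure μ] {g : 𝓔 → ℝ} {M : ℝ}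

lemma integrable_mul_exp_neg_mul (hg : Measurable g) (hgI : ∀ᵐ a ∂μ, g a ∈ Icc 0 M)
    {f : 𝓔 → ℝ} (hf : Measurable f) {C : ℝ} (hfC : ∀ᵐ a ∂μ, |f a| ≤ C) (β : ℝ) :
    Integrable (fun a => f a * exp (-β * g a)) μ := by
  refine Integrable.of_bound (by fun_prop) (C * exp (|β| * M)) ?_
  filter_upwards [hgI, hfC] with a hga hfa
  rw [norm_mul, norm_of_nonneg (exp_pos _).le, Real.norm_eq_abs]
  exact mul_le_mul hfa (exp_neg_mul_le_exp_abs_mul hga) (exp_pos _).le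
    ((abs_nonneg _).trans hfa)

lemma partitionFunction_pos [NeZero μ] (hg : Measurable g) (hgI : ∀ᵐ a ∂μ, g a ∈ Icc 0 M)
    (β : ℝ) : 0 < partitionFunction μ g β :=
  integral_exp_pos <| by
    simpa using integrable_mul_exp_neg_mul hg hgI measurable_const
      (Eventually.of_forall fun _ => le_of_eq (abs_one (α := ℝ))) β

lemma gibbsMean_mem_Icc [NeZero μ] (hg : Measurable g) (hgI : ∀ᵐ a ∂μ, g a ∈ Icc 0 M)
    {f : 𝓔 → ℝ} (hf : Measurable f) {C : ℝ} (hfI : ∀ᵐ a ∂μ, f a ∈ Icc 0 C) (β : ℝ) :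
    gibbsMean μ g β f ∈ Icc 0 C := by
  have hZ := partitionFunction_pos hg hgI β
  have hfC : ∀ᵐ a ∂μ, |f a| ≤ C := hfI.mono fun a h => (abs_of_nonneg h.1).trans_le h.2
  have hnum_le : ∫ a, f a * exp (-β * g a) ∂μ ≤ C * partitionFunction μ g β := by
    rw [partitionFunction, ← integral_const_mul]
    refine integral_mono_ae (integrable_mul_exp_neg_mul hg hgI hf hfC β)
      (integrable_mul_exp_neg_mul hg hgI measurable_const
        (Eventually.of_forall fun _ => le_rfl) β) ?_
    filter_upwards [hfI] with a ha
    exact mul_le_mul_of_nonneg_right ha.2 (exp_pos _).le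
  refine ⟨div_nonneg (integral_nonneg_of_ae ?_) hZ.le, (div_le_iff₀ hZ).2 hnum_le⟩
  filter_upwards [hfI] with a ha
  exact mul_nonneg ha.1 (exp_pos _).le

lemma abs_gibbsVariance_le [NeZero μ] (hg : Measurable g) (hgI : ∀ᵐ a ∂μ, g a ∈ Icc 0 M)
    (β : ℝ) : |gibbsVariance μ g β| ≤ M ^ 2 := by
  have hsq := gibbsMean_mem_Icc hg hgI (hg.pow_const 2) (C := M ^ 2)
    (hgI.mono fun a h => ⟨sq_nonneg _, pow_le_pow_left₀ h.1 h.2 2⟩) β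
  have hmean := gibbsMean_mem_Icc hg hgI hg hgI β
  have hmean_sq : gibbsMean μ g β g ^ 2 ≤ M ^ 2 := pow_le_pow_left₀ hmean.1 hmean.2 2
  rw [gibbsVariance, abs_sub_le_iff]
  constructor <;> nlinarith [hsq.1, hsq.2, sq_nonneg (gibbsMean μ g β g)]

lemma hasDerivAt_integral_mul_exp_neg_mul (hg : Measurable g)
    (hgI : ∀ᵐ a ∂μ, g a ∈ Icc 0 M) {f : 𝓔 → ℝ} (hf : Measurable f) {C : ℝ}
    (hfC : ∀ᵐ a ∂μ, |f a| ≤ C) (β₀ : ℝ) :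
    HasDerivAt (fun β => ∫ a, f a * exp (-β * g a) ∂μ)
      (-∫ a, f a * g a * exp (-β₀ * g a) ∂μ) β₀ := by
  have hbound : ∀ᵐ a ∂μ, ∀ β ∈ Metric.ball β₀ 1,
      ‖-(f a * g a * exp (-β * g a))‖ ≤ C * M * exp ((|β₀| + 1) * M) := by
    filter_upwards [hgI, hfC] with a hga hfa β hβ
    have hβ_abs : |β| ≤ |β₀| + 1 := by
      have := abs_sub_abs_le_abs_sub β β₀
      rw [Metric.mem_ball, Real.dist_eq] at hβ
      linarith
    have hexp : exp (-β * g a) ≤ exp ((|β₀| + 1) * M) :=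
      (exp_neg_mul_le_exp_abs_mul hga).trans <|
        exp_le_exp.2 (mul_le_mul_of_nonneg_right hβ_abs (hga.1.trans hga.2))
    rw [norm_neg, norm_mul, norm_mul, norm_of_nonneg (exp_pos _).le, Real.norm_eq_abs,
      Real.norm_eq_abs, abs_of_nonneg hga.1]
    exact mul_le_mul (mul_le_mul hfa hga.2 hga.1 ((abs_nonneg _).trans hfa)) hexp
      (exp_pos _).le (mul_nonneg ((abs_nonneg _).trans hfa) (hga.1.trans hga.2))
  have hderiv : ∀ a, ∀ β ∈ Metric.ball β₀ 1,
      HasDerivAt (fun β => f a * exp (-β * g a)) (-(f a * g a * exp (-β * g a))) β := by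
    intro a β _
    exact ((((hasDerivAt_neg β).mul_const (g a)).exp).const_mul (f a)).congr_deriv (by ring)
  have key := hasDerivAt_integral_of_dominated_loc_of_deriv_le (Metric.ball_mem_nhds β₀ one_pos)
    (Eventually.of_forall fun β => (integrable_mul_exp_neg_mul hg hgI hf hfC β).1)
    (integrable_mul_exp_neg_mul hg hgI hf hfC β₀) (by fun_prop) hbound
    (integrable_const _) (Eventually.of_forall hderiv)
  simpa only [integral_neg] using key.2

lemma hasDerivAt_gibbsMean_self [NeZero μ] (hg : Measurable g) (hgI : ∀ᵐ a ∂μ, g a ∈ Icc 0 M)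
    (β : ℝ) : HasDerivAt (fun β => gibbsMean μ g β g) (-gibbsVariance μ g β) β := by
  have hgM : ∀ᵐ a ∂μ, |g a| ≤ M := hgI.mono fun a h => (abs_of_nonneg h.1).trans_le h.2
  have hZ : HasDerivAt (partitionFunction μ g) (-∫ a, g a * exp (-β * g a) ∂μ) β := by
    have := hasDerivAt_integral_mul_exp_neg_mul hg hgI measurable_const
      (Eventually.of_forall fun _ => le_of_eq (abs_one (α := ℝ))) β
    simp only [one_mul] at this
    exact this
  have hN := hasDerivAt_integral_mul_exp_neg_mul hg hgI hg hgM β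
  have hZ_ne := (partitionFunction_pos hg hgI β).ne'
  have hsq : ∫ a, g a * g a * exp (-β * g a) ∂μ = ∫ a, g a ^ 2 * exp (-β * g a) ∂μ := by
    simp only [← sq]
  refine (hN.div hZ hZ_ne).congr_deriv ?_
  rw [gibbsVariance, gibbsMean, gibbsMean, hsq]
  set Z := partitionFunction μ g β
  set N := ∫ a, g a * exp (-β * g a) ∂μ
  set V := ∫ a, g a ^ 2 * exp (-β * g a) ∂μ
  field_simp
  ring

end GibbsMean

section Thermodynamics

variable {μ : Measure 𝓔} {ε : 𝓔 → ℝ} {ε0 kB T M : ℝ}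

lemma deltaFun_eq_gibbsMean :
    deltaFun μ ε ε0 kB T =
      2 * (kB * T)⁻¹ * gibbsMean μ (fun ζ => ε ζ - ε0) (kB * T)⁻¹ (fun ζ => ε ζ - ε0) := by
  simp only [deltaFun, gibbsMean, partitionFunction, neg_div, div_eq_inv_mul (ε _ - ε0), neg_mul]
  ring

lemma mul_deltaFun_eq_gibbsMean (hkB : kB ≠ 0) (hT : T ≠ 0) :
    T * deltaFun μ ε ε0 kB T =
      2 / kB * gibbsMean μ (fun ζ => ε ζ - ε0) (kB * T)⁻¹ (fun ζ => ε ζ - ε0) := by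
  rw [deltaFun_eq_gibbsMean]
  field_simp

variable [IsFiniteMeasure μ] [NeZero μ]

lemma abs_deltaFun_le (hε : Measurable ε) (hgI : ∀ᵐ ζ ∂μ, ε ζ - ε0 ∈ Icc 0 M) :
    |deltaFun μ ε ε0 kB T| ≤ 2 * |(kB * T)⁻¹| * M := by
  have hg : Measurable fun ζ => ε ζ - ε0 := hε.sub_const ε0
  have hmean := gibbsMean_mem_Icc hg hgI hg hgI (kB * T)⁻¹
  rw [deltaFun_eq_gibbsMean, abs_mul, abs_mul, abs_two, abs_of_nonneg hmean.1]
  exact mul_le_mul_of_nonneg_left hmean.2 (by positivity)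

lemma hasDerivAt_mul_deltaFun (hε : Measurable ε) (hgI : ∀ᵐ ζ ∂μ, ε ζ - ε0 ∈ Icc 0 M)
    (hkB : kB ≠ 0) (hT : T ≠ 0) :
    HasDerivAt (fun s => s * deltaFun μ ε ε0 kB s)
      (2 * ((kB * T)⁻¹) ^ 2 * gibbsVariance μ (fun ζ => ε ζ - ε0) (kB * T)⁻¹) T := by
  have hβ : HasDerivAt (fun s => (kB * s)⁻¹) (-kB / (kB * T) ^ 2) T := by
    simpa using ((hasDerivAt_id T).const_mul kB).fun_inv (mul_ne_zero hkB hT)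
  have hmean := ((hasDerivAt_gibbsMean_self (hε.sub_const ε0) hgI _).comp T hβ).const_mul (2 / kB)
  refine (hmean.congr_of_eventuallyEq ?_).congr_deriv ?_
  · filter_upwards [eventually_ne_nhds hT] with s hs
    exact mul_deltaFun_eq_gibbsMean hkB hs
  · field_simp

lemma abs_Dfun_le (hε : Measurable ε) (hgI : ∀ᵐ ζ ∂μ, ε ζ - ε0 ∈ Icc 0 M)
    (hkB : kB ≠ 0) (hT : T ≠ 0) :
    |Dfun μ ε ε0 kB T| ≤ 2 * ((kB * T)⁻¹) ^ 2 * M ^ 2 := by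
  rw [Dfun, (hasDerivAt_mul_deltaFun hε hgI hkB hT).deriv, abs_mul, abs_of_nonneg (by positivity)]
  exact mul_le_mul_of_nonneg_left (abs_gibbsVariance_le (hε.sub_const ε0) hgI _) (by positivity)

end Thermodynamics

theorem delta_tendsto_zero_of_bounded_energy_general
    (μ : Measure 𝓔) (hμ : μ Set.univ ≠ 0)
    (kB : ℝ) (hkB : 0 < kB)
    (ε : 𝓔 → ℝ) (hε : Measurable ε) (ε0 : ℝ)
    (hlow : ∀ᵐ ζ ∂μ, ε0 ≤ ε ζ)
    (hZ : ∀ β : ℝ, 0 < β → Integrable (fun ζ => Real.exp (-β * (ε ζ - ε0))) μ)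
    (R : ℝ) (hbd : ∀ᵐ ζ ∂μ, ε ζ ≤ R) :
    Tendsto (fun T => deltaFun μ ε ε0 kB T) atTop (nhds 0) ∧
    Tendsto (fun T => Dfun μ ε ε0 kB T) atTop (nhds 0) := by
  have : NeZero μ := ⟨fun h => hμ (by simp [h])⟩
  have hgI : ∀ᵐ ζ ∂μ, ε ζ - ε0 ∈ Icc 0 (R - ε0) := by
    filter_upwards [hlow, hbd] with ζ h0 hR using ⟨sub_nonneg.2 h0, sub_le_sub_right hR ε0⟩
  have : IsFiniteMeasure μ :=
    isFiniteMeasure_of_integrable_exp_neg_mul zero_le_one (hZ 1 one_pos) (hgI.mono fun _ h => h.2)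
  have hβ : Tendsto (fun T => (kB * T)⁻¹) atTop (𝓝 0) :=
    (tendsto_id.const_mul_atTop hkB).inv_tendsto_atTop
  have hδ_bound : Tendsto (fun T => 2 * |(kB * T)⁻¹| * (R - ε0)) atTop (𝓝 0) := by
    simpa using (hβ.abs.const_mul 2).mul_const (R - ε0)
  have hD_bound : Tendsto (fun T => 2 * ((kB * T)⁻¹) ^ 2 * (R - ε0) ^ 2) atTop (𝓝 0) := by
    simpa using ((hβ.pow 2).const_mul 2).mul_const ((R - ε0) ^ 2)
  refine ⟨squeeze_zero_norm (fun T => ?_) hδ_bound, squeeze_zero_norm' ?_ hD_bound⟩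
  · exact (Real.norm_eq_abs _).trans_le (abs_deltaFun_le hε hgI)
  · filter_upwards [eventually_ne_atTop 0] with T hT
    exact (Real.norm_eq_abs _).trans_le (abs_Dfun_le hε hgI hkB.ne' hT)

/-- **Corollary (bounded energies).**
If `ε ≤ R` μ-a.e. for some real `R`, then `δ(T) → 0` and `D(T) → 0` as `T → ∞`. -/
theorem delta_tendsto_zero_of_bounded_energy
    (μ : Measure 𝓔) (hμ : μ Set.univ ≠ 0)
    (kB : ℝ) (hkB : 0 < kB)
    (ε : 𝓔 → ℝ) (hε : Measurable ε) (ε0 : ℝ)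
    (hlow : ∀ᵐ ζ ∂μ, ε0 ≤ ε ζ)
    (hsup : ∀ R : ℝ, (∀ᵐ ζ ∂μ, R ≤ ε ζ) → R ≤ ε0)
    (hZ : ∀ β : ℝ, 0 < β → Integrable (fun ζ => Real.exp (-β * (ε ζ - ε0))) μ)
    (R : ℝ) (hbd : ∀ᵐ ζ ∂μ, ε ζ ≤ R) :
    Tendsto (fun T => deltaFun μ ε ε0 kB T) atTop (nhds 0) ∧
    Tendsto (fun T => Dfun μ ε ε0 kB T) atTop (nhds 0) :=
  delta_tendsto_zero_of_bounded_energy_general μ hμ kB hkB ε hε ε0 hlow hZ R hbd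

end
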